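/- For each 0 ≤ p ≤ 4, the formal power series I_{p,p} ∈ ℚ[[z]] has positive radius of convergence (its coefficients grow at most geometrically); moreover its constant coefficient equals 1, so the associated holomorphic function takes the value 1 at z = 0. -/

import Mathlib

/-- `A_d(w) = (∏_{r=1}^{3d} (3w+r))² · ((∏_{r=1}^{d} (w+r))⁶)⁻¹ ∈ ℚ[[w]]`. -/
noncomputable def Acoef (d : ℕ) : PowerSeries ℚ :=
  (∏ r ∈ Finset.Icc 1 (3 * d), (3 * PowerSeries.X + (r : PowerSeries ℚ))) ^ 2 *
    ((∏ r ∈ Finset.Icc 1 d, (PowerSeries.X + (r : PowerSeries ℚ))) ^ 6)⁻¹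

/-- `Ĩ_q ∈ ℚ[[z]]`: the coefficient of `z^d` is the coefficient of `w^q` in `A_d(w)`. -/
noncomputable def Itil (q : ℕ) : PowerSeries ℚ :=
  PowerSeries.mk fun d => PowerSeries.coeff (R := ℚ) q (Acoef d)

/-- `S = (ℚ[[z]])[t]`. -/
abbrev S : Type := Polynomial (PowerSeries ℚ)

/-- The operator `z·∂/∂z` on `ℚ[[z]]`. -/
noncomputable def zdz (f : PowerSeries ℚ) : PowerSeries ℚ :=
  PowerSeries.mk fun n => (n : ℚ) * PowerSeries.coeff (R := ℚ) n f

/-- The derivation `δ = ∂/∂t + z·∂/∂z` on `S = (ℚ[[z]])[t]`, determined by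
`δ(t) = 1` and `δ(z) = z`. -/
noncomputable def deltaOp (p : S) : S :=
  Polynomial.derivative p + p.sum fun n a => Polynomial.C (zdz a) * Polynomial.X ^ n

/-- `I_{0,q} = Σ_{k=0}^{q} (t^k/k!)·Ĩ_{q−k} ∈ S`. -/
noncomputable def I0S (q : ℕ) : S :=
  ∑ k ∈ Finset.range (q + 1),
    Polynomial.C (PowerSeries.C (R := ℚ) (1 / (k.factorial : ℚ)) * Itil (q - k)) * Polynomial.X ^ k

/-- The recursion `I_{p,q} = δ(I_{p−1,q} · I_{p−1,p−1}⁻¹)`, where the inverse of the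
(constant, unit) polynomial `I_{p−1,p−1}` is taken via the power series inverse of its
constant coefficient. -/
noncomputable def IPQ : ℕ → ℕ → S
  | 0 => I0S
  | p + 1 => fun q => deltaOp (IPQ p q * Polynomial.C (((IPQ p p).coeff 0)⁻¹))

/-!
Call a power series geometrically bounded if `‖aₙ‖ ≤ C rⁿ`. This class is closed under sums,
products, `z d/dz` (since `n ≤ 2ⁿ`) and inverses of series with constant coefficient `1`, and
`I_{p,q}` is built from the `Ĩ_q` by exactly these operations, applied coefficientwise in `t`.
For `Ĩ_q`, the coefficient of `w^q` in `A_d` is bounded by the submultiplicative norm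
`∑_{k ≤ q} |f_k|`; factor by factor this gives `(4^{3d} (3d)!)² ((q+1)^d / d!)⁶`, which is at most
`(2²² (q+1)⁶)^d` because `(3d)! ≤ 32^d d!³`.

Modulo `z` the derivation `δ` becomes `d/dt` and `Ĩ_q ≡ [q = 0]` (as `A_0 = 1`), so
`I_{p,q} ≡ t^{q-p}/(q-p)!` by induction on `p`; on the diagonal this is `1`.
-/

open PowerSeries Finset Nat

section GeomBounded

variable {R : Type*} [NormedRing R]

def GeomBounded (f : R⟦X⟧) : Prop :=
  ∃ C r : ℝ, 0 < C ∧ 0 < r ∧ ∀ n, ‖coeff n f‖ ≤ C * r ^ n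

lemma geomBounded_C (a : R) : GeomBounded (C a) := by
  refine ⟨‖a‖ + 1, 1, by positivity, one_pos, fun n => ?_⟩
  rw [coeff_C]
  split_ifs <;> simp [add_nonneg]

lemma geomBounded_zero : GeomBounded (0 : R⟦X⟧) := by
  simpa using geomBounded_C (0 : R)

lemma GeomBounded.add {f g : R⟦X⟧} (hf : GeomBounded f) (hg : GeomBounded g) :
    GeomBounded (f + g) := by
  obtain ⟨C₁, r₁, hC₁, hr₁, hf⟩ := hf
  obtain ⟨C₂, r₂, hC₂, hr₂, hg⟩ := hg
  refine ⟨C₁ + C₂, max r₁ r₂, by positivity, lt_max_of_lt_left hr₁, fun n => ?_⟩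
  calc ‖coeff n (f + g)‖ ≤ C₁ * r₁ ^ n + C₂ * r₂ ^ n :=
        (map_add (coeff n) f g ▸ norm_add_le _ _).trans (add_le_add (hf n) (hg n))
    _ ≤ C₁ * max r₁ r₂ ^ n + C₂ * max r₁ r₂ ^ n := by
        gcongr
        exacts [le_max_left _ _, le_max_right _ _]
    _ = (C₁ + C₂) * max r₁ r₂ ^ n := by ring

lemma GeomBounded.sum {ι : Type*} (s : Finset ι) {f : ι → R⟦X⟧}
    (hf : ∀ i ∈ s, GeomBounded (f i)) : GeomBounded (∑ i ∈ s, f i) :=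
  Finset.sum_induction f GeomBounded (fun _ _ => GeomBounded.add)
    geomBounded_zero hf

lemma GeomBounded.mul {f g : R⟦X⟧} (hf : GeomBounded f) (hg : GeomBounded g) :
    GeomBounded (f * g) := by
  obtain ⟨C₁, r₁, hC₁, hr₁, hf⟩ := hf
  obtain ⟨C₂, r₂, hC₂, hr₂, hg⟩ := hg
  set r := max r₁ r₂
  have hr : 0 < r := lt_max_of_lt_left hr₁
  refine ⟨C₁ * C₂, 2 * r, by positivity, by positivity, fun n => ?_⟩
  have hterm : ∀ p ∈ antidiagonal n, ‖coeff p.1 f * coeff p.2 g‖ ≤ C₁ * C₂ * r ^ n := by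
    intro p hp
    rw [← mem_antidiagonal.mp hp]
    calc ‖coeff p.1 f * coeff p.2 g‖ ≤ (C₁ * r₁ ^ p.1) * (C₂ * r₂ ^ p.2) :=
          (norm_mul_le _ _).trans (mul_le_mul (hf _) (hg _) (norm_nonneg _) (by positivity))
      _ ≤ (C₁ * r ^ p.1) * (C₂ * r ^ p.2) := by
          gcongr
          exacts [le_max_left _ _, le_max_right _ _]
      _ = C₁ * C₂ * r ^ (p.1 + p.2) := by ring
  have hn : (n : ℝ) + 1 ≤ 2 ^ n := by exact_mod_cast (Nat.lt_two_pow_self : n < 2 ^ n)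
  calc ‖coeff n (f * g)‖ ≤ ∑ p ∈ antidiagonal n, C₁ * C₂ * r ^ n :=
        coeff_mul n f g ▸ norm_sum_le_of_le _ hterm
    _ = (n + 1) * (C₁ * C₂ * r ^ n) := by simp
    _ ≤ 2 ^ n * (C₁ * C₂ * r ^ n) := by gcongr
    _ = C₁ * C₂ * (2 * r) ^ n := by ring

end GeomBounded

lemma sum_mul_pow_mul_pow_le {C r : ℝ} (hr : 0 ≤ r) (n : ℕ) :
    ∑ j ∈ range (n + 1), C * r ^ (j + 1) * (r * (1 + C)) ^ (n - j) ≤ (r * (1 + C)) ^ (n + 1) := by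
  set s := r * (1 + C)
  have hgeom := geom_sum₂_mul r s (n + 1)
  simp only [Nat.add_sub_cancel] at hgeom
  calc ∑ j ∈ range (n + 1), C * r ^ (j + 1) * s ^ (n - j)
      = (s - r) * ∑ j ∈ range (n + 1), r ^ j * s ^ (n - j) := by
        rw [mul_sum]
        refine sum_congr rfl fun j _ => ?_
        ring
    _ = s ^ (n + 1) - r ^ (n + 1) := by linear_combination -hgeom
    _ ≤ s ^ (n + 1) := by linarith [pow_nonneg hr (n + 1)]

/-- With `s = r (1 + C)`, the recursion `gₙ = -∑_{k ≥ 1} f_k g_{n-k}` for `g = f⁻¹` preserves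
`‖gₙ‖ ≤ sⁿ`. -/
lemma GeomBounded.inv {K : Type*} [NormedField K] {f : K⟦X⟧} (hf : GeomBounded f)
    (h₀ : constantCoeff f = 1) : GeomBounded f⁻¹ := by
  obtain ⟨C, r, hC, hr, hf⟩ := hf
  refine ⟨1, r * (1 + C), one_pos, by positivity, fun n => ?_⟩
  rw [one_mul]
  induction n using Nat.strong_induction_on with
  | _ n ih =>
  rcases n with _ | n
  · simp [coeff_inv, h₀]
  rw [coeff_inv, if_neg n.succ_ne_zero, h₀, inv_one, neg_one_mul, norm_neg,
    Nat.sum_antidiagonal_eq_sum_range_succ_mk, sum_range_succ']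
  simp only [Nat.sub_zero, lt_irrefl, if_false, add_zero, Nat.add_sub_add_right]
  refine (norm_sum_le_of_le _ fun j hj => ?_).trans (sum_mul_pow_mul_pow_le hr.le n)
  have hjn : n - j < n + 1 := Nat.lt_succ_of_le (Nat.sub_le n j)
  rw [if_pos hjn]
  exact (norm_mul_le _ _).trans (mul_le_mul (hf _) (ih _ hjn) (norm_nonneg _) (by positivity))

lemma coeff_zdz (n : ℕ) (f : ℚ⟦X⟧) : coeff n (zdz f) = n * coeff n f :=
  coeff_mk _ _

lemma GeomBounded.zdz {f : ℚ⟦X⟧} (hf : GeomBounded f) : GeomBounded (zdz f) := by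
  obtain ⟨C, r, hC, hr, hf⟩ := hf
  refine ⟨C, 2 * r, hC, by positivity, fun n => ?_⟩
  have hn : (n : ℝ) ≤ 2 ^ n := by exact_mod_cast (Nat.lt_two_pow_self : n < 2 ^ n).le
  calc ‖coeff n (_root_.zdz f)‖ = n * ‖coeff n f‖ := by simp [coeff_zdz, ← Rat.norm_cast_real]
    _ ≤ 2 ^ n * (C * r ^ n) := by gcongr; exact hf n
    _ = C * (2 * r) ^ n := by ring

section truncNorm

variable {R : Type*} [NormedRing R]

noncomputable def truncNorm (q : ℕ) (f : R⟦X⟧) : ℝ :=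
  ∑ k ∈ range (q + 1), ‖coeff k f‖

lemma truncNorm_nonneg (q : ℕ) (f : R⟦X⟧) : 0 ≤ truncNorm q f :=
  sum_nonneg fun _ _ => norm_nonneg _

lemma norm_coeff_le_truncNorm (q : ℕ) (f : R⟦X⟧) : ‖coeff q f‖ ≤ truncNorm q f :=
  single_le_sum (f := fun k => ‖coeff k f‖) (fun _ _ => norm_nonneg _) (self_mem_range_succ q)

lemma truncNorm_add_le (q : ℕ) (f g : R⟦X⟧) :
    truncNorm q (f + g) ≤ truncNorm q f + truncNorm q g := by
  rw [truncNorm, truncNorm, truncNorm, ← sum_add_distrib]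
  exact sum_le_sum fun k _ => (map_add (coeff k) f g ▸ norm_add_le _ _)

lemma truncNorm_C_mul_X_pow_le (q k : ℕ) (a : R) : truncNorm q (C a * X ^ k) ≤ ‖a‖ := by
  simp only [truncNorm, coeff_C_mul_X_pow, apply_ite norm, norm_zero, sum_ite_eq']
  split_ifs <;> simp

lemma truncNorm_mul_le (q : ℕ) (f g : R⟦X⟧) :
    truncNorm q (f * g) ≤ truncNorm q f * truncNorm q g := by
  calc truncNorm q (f * g)
      ≤ ∑ n ∈ range (q + 1), ∑ k ∈ range (n + 1), ‖coeff k f‖ * ‖coeff (n - k) g‖ := by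
        refine sum_le_sum fun n _ => ?_
        rw [coeff_mul, Nat.sum_antidiagonal_eq_sum_range_succ_mk]
        exact norm_sum_le_of_le _ fun k _ => norm_mul_le _ _
    _ = ∑ m ∈ range (q + 1), ∑ k ∈ range (q + 1 - m), ‖coeff m f‖ * ‖coeff k g‖ :=
        sum_range_diag_flip _ fun m k => ‖coeff m f‖ * ‖coeff k g‖
    _ ≤ ∑ m ∈ range (q + 1), ∑ k ∈ range (q + 1), ‖coeff m f‖ * ‖coeff k g‖ := by
        refine sum_le_sum fun m _ => sum_le_sum_of_subset_of_nonneg ?_ fun _ _ _ => by positivity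
        exact range_subset_range.2 (Nat.sub_le _ _)
    _ = truncNorm q f * truncNorm q g := (sum_mul_sum _ _ _ _).symm

variable [NormOneClass R]

lemma truncNorm_pow_le (q : ℕ) (f : R⟦X⟧) (n : ℕ) : truncNorm q (f ^ n) ≤ truncNorm q f ^ n := by
  induction n with
  | zero => simpa using truncNorm_C_mul_X_pow_le q 0 (1 : R)
  | succ n ih =>
    rw [pow_succ, pow_succ]
    exact (truncNorm_mul_le q _ _).trans
      (mul_le_mul_of_nonneg_right ih (truncNorm_nonneg q f))

end truncNorm

lemma truncNorm_prod_le {R : Type*} [NormedCommRing R] [NormOneClass R] {ι : Type*}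
    (q : ℕ) (s : Finset ι) (f : ι → R⟦X⟧) :
    truncNorm q (∏ i ∈ s, f i) ≤ ∏ i ∈ s, truncNorm q (f i) := by
  classical
  induction s using Finset.induction_on with
  | empty => simpa using truncNorm_C_mul_X_pow_le q 0 (1 : R)
  | insert a s ha ih =>
    rw [prod_insert ha, prod_insert ha]
    exact (truncNorm_mul_le q _ _).trans
      (mul_le_mul_of_nonneg_left ih (truncNorm_nonneg q (f a)))

lemma truncNorm_C_mul_X_add_C_le {R : Type*} [NormedRing R] (q : ℕ) (a b : R) :
    truncNorm q (C a * X + C b) ≤ ‖a‖ + ‖b‖ := by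
  refine (truncNorm_add_le q _ _).trans (add_le_add ?_ ?_)
  · simpa using truncNorm_C_mul_X_pow_le q 1 a
  · simpa using truncNorm_C_mul_X_pow_le q 0 b

lemma inv_X_add_C {K : Type*} [Field K] {a : K} (ha : a ≠ 0) :
    (X + C a)⁻¹ = mk fun n => (-a⁻¹) ^ n * a⁻¹ := by
  rw [inv_eq_iff_mul_eq_one (by simpa using ha)]
  ext (_ | n)
  · simp [ha]
  · rw [mul_add, map_add, coeff_succ_mul_X, coeff_mul_C, coeff_mk, coeff_mk, coeff_one,
      if_neg n.succ_ne_zero, pow_succ]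
    field_simp
    ring

lemma truncNorm_inv_X_add_C_le {K : Type*} [NormedField K] {a : K} (ha : 1 ≤ ‖a‖) (q : ℕ) :
    truncNorm q (X + C a)⁻¹ ≤ (q + 1) / ‖a‖ := by
  have ha₀ : a ≠ 0 := norm_pos_iff.mp (zero_lt_one.trans_le ha)
  have hinv : ‖a‖⁻¹ ≤ 1 := inv_le_one_of_one_le₀ ha
  rw [inv_X_add_C ha₀, truncNorm]
  calc ∑ k ∈ range (q + 1), ‖coeff k (mk fun n => (-a⁻¹) ^ n * a⁻¹)‖
      ≤ ∑ _k ∈ range (q + 1), ‖a‖⁻¹ := by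
        refine sum_le_sum fun k _ => ?_
        rw [coeff_mk, norm_mul, norm_pow, norm_neg, norm_inv]
        exact mul_le_of_le_one_left (by positivity) (pow_le_one₀ (by positivity) hinv)
    _ = (q + 1) / ‖a‖ := by simp [div_eq_mul_inv]

/-- Multiplicative even when a constant coefficient vanishes, since then both sides are `0`. -/
noncomputable def PowerSeries.invMonoidHom (K : Type*) [Field K] : K⟦X⟧ →* K⟦X⟧ where
  toFun f := f⁻¹
  map_one' := by simp
  map_mul' f g := by rw [PowerSeries.mul_inv_rev, mul_comm]

lemma prod_Icc_one_natCast (n : ℕ) : ∏ r ∈ Icc 1 n, (r : ℝ) = n ! := by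
  rw [← Nat.cast_prod, ← Ico_add_one_right_eq_Icc, prod_Ico_id_eq_factorial]

lemma Nat.factorial_add_le (m n : ℕ) : (m + n)! ≤ 2 ^ (m + n) * m ! * n ! := by
  rw [← Nat.add_choose_mul_factorial_mul_factorial, mul_assoc, mul_assoc]
  exact Nat.mul_le_mul_right _ (Nat.choose_le_two_pow _ _)

lemma Nat.factorial_three_mul_le (n : ℕ) : (3 * n)! ≤ 32 ^ n * n ! ^ 3 := by
  calc (3 * n)! = (n + (n + n))! := by ring_nf
    _ ≤ 2 ^ (n + (n + n)) * n ! * (n + n)! := Nat.factorial_add_le _ _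
    _ ≤ 2 ^ (n + (n + n)) * n ! * (2 ^ (n + n) * n ! * n !) := by
        gcongr
        exact Nat.factorial_add_le _ _
    _ = 2 ^ (5 * n) * n ! ^ 3 := by ring
    _ = 32 ^ n * n ! ^ 3 := by rw [pow_mul]; norm_num

lemma truncNorm_prod_three_mul_X_add_le (q d : ℕ) :
    truncNorm q (∏ r ∈ Icc 1 (3 * d), (3 * X + (r : ℚ⟦X⟧))) ≤ 64 ^ d * (3 * d)! := by
  calc truncNorm q (∏ r ∈ Icc 1 (3 * d), (3 * X + (r : ℚ⟦X⟧)))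
      ≤ ∏ r ∈ Icc 1 (3 * d), (4 * r : ℝ) := by
        refine (truncNorm_prod_le q _ _).trans
          (prod_le_prod (fun _ _ => truncNorm_nonneg _ _) fun r hr => ?_)
        have hr : (1 : ℝ) ≤ r := by exact_mod_cast (mem_Icc.mp hr).1
        have hlin := truncNorm_C_mul_X_add_C_le q (3 : ℚ) (r : ℚ)
        simp only [map_ofNat, map_natCast] at hlin
        refine hlin.trans ?_
        simp only [← Rat.norm_cast_real, Rat.cast_ofNat, Rat.cast_natCast, Real.norm_ofNat,
          Real.norm_natCast]
        linarith
    _ = 64 ^ d * (3 * d)! := by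
        rw [prod_mul_distrib, prod_const, Nat.card_Icc, prod_Icc_one_natCast, Nat.add_sub_cancel,
          pow_mul]
        norm_num

lemma truncNorm_inv_prod_X_add_pow_le (q d : ℕ) :
    truncNorm q ((∏ r ∈ Icc 1 d, (X + (r : ℚ⟦X⟧))) ^ 6)⁻¹ ≤ ((q + 1) ^ d / d !) ^ 6 := by
  have hinv : ((∏ r ∈ Icc 1 d, (X + (r : ℚ⟦X⟧))) ^ 6)⁻¹ = (∏ r ∈ Icc 1 d, (X + (r : ℚ⟦X⟧))⁻¹) ^ 6 :=
    (map_pow (invMonoidHom ℚ) _ 6).trans (congrArg (· ^ 6) (map_prod (invMonoidHom ℚ) _ _))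
  rw [hinv]
  refine (truncNorm_pow_le q _ 6).trans (pow_le_pow_left₀ (truncNorm_nonneg _ _) ?_ 6)
  calc truncNorm q (∏ r ∈ Icc 1 d, (X + (r : ℚ⟦X⟧))⁻¹)
      ≤ ∏ r ∈ Icc 1 d, ((q + 1) / r : ℝ) := by
        refine (truncNorm_prod_le q _ _).trans
          (prod_le_prod (fun _ _ => truncNorm_nonneg _ _) fun r hr => ?_)
        have hr : 1 ≤ r := (mem_Icc.mp hr).1
        have h := truncNorm_inv_X_add_C_le (a := (r : ℚ)) (by simpa [← Rat.norm_cast_real]) q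
        simpa [← Rat.norm_cast_real] using h
    _ = (q + 1) ^ d / d ! := by
        rw [prod_div_distrib, prod_const, Nat.card_Icc, prod_Icc_one_natCast, Nat.add_sub_cancel]

lemma truncNorm_Acoef_le (q d : ℕ) : truncNorm q (Acoef d) ≤ (2 ^ 22 * (q + 1) ^ 6) ^ d := by
  have hfac : ((3 * d)! : ℝ) ≤ 32 ^ d * d ! ^ 3 := by exact_mod_cast Nat.factorial_three_mul_le d
  have hd : (0 : ℝ) < d ! := by positivity
  calc truncNorm q (Acoef d)
      ≤ truncNorm q (∏ r ∈ Icc 1 (3 * d), (3 * X + (r : ℚ⟦X⟧))) ^ 2 *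
          truncNorm q ((∏ r ∈ Icc 1 d, (X + (r : ℚ⟦X⟧))) ^ 6)⁻¹ :=
        (truncNorm_mul_le q _ _).trans
          (mul_le_mul_of_nonneg_right (truncNorm_pow_le q _ 2) (truncNorm_nonneg _ _))
    _ ≤ (64 ^ d * (32 ^ d * d ! ^ 3)) ^ 2 * ((q + 1) ^ d / d !) ^ 6 := by
        have hP : truncNorm q (∏ r ∈ Icc 1 (3 * d), (3 * X + (r : ℚ⟦X⟧))) ≤
            64 ^ d * (32 ^ d * d ! ^ 3) :=
          (truncNorm_prod_three_mul_X_add_le q d).trans (by gcongr)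
        exact mul_le_mul (pow_le_pow_left₀ (truncNorm_nonneg _ _) hP 2)
          (truncNorm_inv_prod_X_add_pow_le q d) (truncNorm_nonneg _ _) (by positivity)
    _ = (2 ^ 22 * (q + 1) ^ 6) ^ d := by
        rw [show (2 ^ 22 * ((q : ℝ) + 1) ^ 6) ^ d = (64 ^ d * 32 ^ d) ^ 2 * ((q + 1) ^ d) ^ 6 by
          rw [← mul_pow, ← pow_mul, ← pow_mul, mul_comm d, mul_comm d, pow_mul, pow_mul, ← mul_pow]
          norm_num]
        field_simp

lemma geomBounded_Itil (q : ℕ) : GeomBounded (Itil q) :=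
  ⟨1, 2 ^ 22 * (q + 1) ^ 6, one_pos, by positivity, fun d => by
    rw [Itil, coeff_mk, one_mul]
    exact (norm_coeff_le_truncNorm q _).trans (truncNorm_Acoef_le q d)⟩

lemma coeff_deltaOp (p : S) (n : ℕ) :
    (deltaOp p).coeff n = p.coeff (n + 1) * (n + 1) + zdz (p.coeff n) := by
  rw [deltaOp, Polynomial.coeff_add, Polynomial.coeff_derivative, Polynomial.sum_def,
    Polynomial.finsetSum_coeff]
  simp only [Polynomial.coeff_C_mul_X_pow, sum_ite_eq]
  split_ifs with h
  · rfl
  · rw [Polynomial.notMem_support_iff.mp h]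
    ext
    simp [coeff_zdz]

section CoeffGeomBounded

variable {R : Type*} [NormedRing R]

def CoeffGeomBounded (p : Polynomial R⟦X⟧) : Prop :=
  ∀ n, GeomBounded (p.coeff n)

lemma coeffGeomBounded_C {f : R⟦X⟧} (hf : GeomBounded f) : CoeffGeomBounded (Polynomial.C f) := by
  intro n
  rw [Polynomial.coeff_C]
  split_ifs
  exacts [hf, geomBounded_zero]

lemma CoeffGeomBounded.mul {p q : Polynomial R⟦X⟧} (hp : CoeffGeomBounded p)
    (hq : CoeffGeomBounded q) : CoeffGeomBounded (p * q) := fun n => by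
  rw [Polynomial.coeff_mul]
  exact GeomBounded.sum _ fun x _ => (hp x.1).mul (hq x.2)

end CoeffGeomBounded

lemma CoeffGeomBounded.deltaOp {p : S} (hp : CoeffGeomBounded p) :
    CoeffGeomBounded (deltaOp p) := fun n => by
  rw [coeff_deltaOp]
  refine ((hp (n + 1)).mul ?_).add (hp n).zdz
  simpa using geomBounded_C ((n : ℚ) + 1)

lemma coeffGeomBounded_I0S (q : ℕ) : CoeffGeomBounded (I0S q) := fun n => by
  rw [I0S, Polynomial.finsetSum_coeff]
  refine GeomBounded.sum _ fun k _ => ?_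
  rw [Polynomial.coeff_C_mul_X_pow]
  split_ifs
  exacts [(geomBounded_C _).mul (geomBounded_Itil _), geomBounded_zero]

lemma Acoef_zero : Acoef 0 = 1 := by
  simp [Acoef]

lemma constantCoeff_Itil (q : ℕ) : constantCoeff (Itil q) = if q = 0 then 1 else 0 := by
  rw [Itil, ← coeff_zero_eq_constantCoeff_apply, coeff_mk, Acoef_zero, coeff_one]

lemma map_constantCoeff_deltaOp (p : S) :
    (deltaOp p).map constantCoeff = Polynomial.derivative (p.map constantCoeff) := by
  ext n
  rw [Polynomial.coeff_map, coeff_deltaOp, Polynomial.coeff_derivative, Polynomial.coeff_map,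
    map_add, ← coeff_zero_eq_constantCoeff_apply (zdz _), coeff_zdz]
  simp

lemma map_constantCoeff_IPQ {p q : ℕ} (h : p ≤ q) :
    (IPQ p q).map constantCoeff = Polynomial.C ((q - p)! : ℚ)⁻¹ * Polynomial.X ^ (q - p) := by
  induction p generalizing q with
  | zero =>
    rw [IPQ, I0S, Polynomial.map_sum, sum_eq_single_of_mem q (self_mem_range_succ q)]
    · simp [constantCoeff_Itil]
    · intro k hk hkq
      have : q - k ≠ 0 := by have := mem_range.mp hk; omega
      simp [constantCoeff_Itil, this]
  | succ p ih =>
    have hdiag : constantCoeff ((IPQ p p).coeff 0) = 1 := by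
      simpa using congrArg (Polynomial.coeff · 0) (ih le_rfl)
    obtain ⟨m, rfl⟩ : ∃ m, q = p + 1 + m := ⟨q - (p + 1), by omega⟩
    rw [IPQ, map_constantCoeff_deltaOp, Polynomial.map_mul, Polynomial.map_C, constantCoeff_inv,
      hdiag, inv_one, Polynomial.C_1, mul_one, ih (by omega),
      show p + 1 + m - p = m + 1 by omega, Polynomial.derivative_C_mul_X_pow, Nat.add_sub_cancel,
      show p + 1 + m - (p + 1) = m by omega, Nat.factorial_succ]
    push_cast
    field_simp

lemma constantCoeff_IPQ_coeff_zero_self (p : ℕ) : constantCoeff ((IPQ p p).coeff 0) = 1 := by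
  simpa using congrArg (Polynomial.coeff · 0) (map_constantCoeff_IPQ (le_refl p))

lemma coeffGeomBounded_IPQ (p q : ℕ) : CoeffGeomBounded (IPQ p q) := by
  induction p generalizing q with
  | zero => exact coeffGeomBounded_I0S q
  | succ p ih =>
    exact ((ih q).mul (coeffGeomBounded_C ((ih p 0).inv
      (constantCoeff_IPQ_coeff_zero_self p)))).deltaOp

/-- For each `0 ≤ p ≤ 4`, the power series `I_{p,p} ∈ ℚ[[z]]` has positive radius of
convergence (its coefficients grow at most geometrically), and its constant coefficient
equals `1`, so the associated holomorphic function takes the value `1` at `z = 0`. -/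
theorem IPQ_diagonal_converges :
    ∀ p ≤ 4,
      (∃ C r : ℝ, 0 < C ∧ 0 < r ∧
        ∀ n : ℕ, |((PowerSeries.coeff (R := ℚ) n ((IPQ p p).coeff 0) : ℚ) : ℝ)| ≤ C * r ^ n) ∧
      PowerSeries.constantCoeff (R := ℚ) ((IPQ p p).coeff 0) = 1 :=
  -- the norm on `ℚ` is by definition `‖x‖ = |(x : ℝ)|`
  fun p _ => ⟨coeffGeomBounded_IPQ p p 0, constantCoeff_IPQ_coeff_zero_self p⟩
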